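/- arXiv:0710.4175 — 5 statements merged into one kernel-verified Lean document; each statement's English description precedes it below -/
import Mathlib

section
/- For every z ∈ ℂ with |z| > 1, the number μ₁(z)² + c does not lie in the closed negative real half-line (−∞, 0], so the slit map φ is well defined; moreover φ is holomorphic and injective on Δ = {z ∈ ℂ : |z| > 1} and satisfies φ(Δ) ⊆ Δ. -/
open Complex

/-- `μ₁(z) = (z-1)/(z+1)`. -/
noncomputable def mu1 (z : ℂ) : ℂ := (z - 1) / (z + 1)

/-- `μ₂(z) = (z+1)/(z-1)`. -/
noncomputable def mu2 (z : ℂ) : ℂ := (z + 1) / (z - 1)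

/-- The constant `c = 5329/296`. -/
noncomputable def cst : ℂ := 5329 / 296

/-- The slit map `φ(z) = μ₂( √(μ₁(z)² + c) / √(1 + c) )`, principal square roots. -/
noncomputable def slit (z : ℂ) : ℂ :=
  mu2 ((((mu1 z) ^ 2 + cst) ^ ((1 : ℂ) / 2)) / ((1 + cst) ^ ((1 : ℂ) / 2)))

lemma ne_neg_one_of_abs {z : ℂ} (hz : 1 < ‖z‖) : z + 1 ≠ 0 := by
  intro h
  have : z = -1 := by linear_combination h
  rw [this] at hz
  simp at hz

lemma re_mu1_pos {z : ℂ} (hz : 1 < ‖z‖) : 0 < (mu1 z).re := by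
  have hne : z + 1 ≠ 0 := ne_neg_one_of_abs hz
  have hnsq : 0 < Complex.normSq (z + 1) := by
    rwa [Complex.normSq_pos]
  have h1 : 1 < Complex.normSq z := by
    have := Complex.sq_norm z
    nlinarith [norm_nonneg z]
  rw [mu1, Complex.div_re]
  have hnum : 0 < (z - 1).re * (z + 1).re + (z - 1).im * (z + 1).im := by
    simp only [Complex.sub_re, Complex.add_re, Complex.sub_im, Complex.add_im,
      Complex.one_re, Complex.one_im]
    have : Complex.normSq z = z.re * z.re + z.im * z.im := Complex.normSq_apply z
    nlinarith
  rw [← add_div]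
  exact div_pos hnum hnsq

lemma avoids {z : ℂ} (hz : 1 < ‖z‖) :
    ∀ x : ℝ, x ≤ 0 → (mu1 z) ^ 2 + cst ≠ (x : ℂ) := by
  intro x hx h
  have hre := re_mu1_pos hz
  set w := mu1 z with hw
  have him : (w ^ 2 + cst).im = 0 := by rw [h]; simp
  have him2 : w.im = 0 := by
    simp only [pow_two, Complex.add_im, Complex.mul_im, cst] at him
    have : 2 * w.re * w.im = 0 := by
      norm_num at him; linarith
    rcases mul_eq_zero.mp this with h' | h'
    · rcases mul_eq_zero.mp h' with h'' | h''
      · norm_num at h''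
      · linarith
    · exact h'
  have hre2 : (w ^ 2 + cst).re = x := by rw [h]; simp
  simp only [pow_two, Complex.add_re, Complex.mul_re, him2, cst] at hre2
  norm_num at hre2
  nlinarith

lemma mem_slit {z : ℂ} (hz : 1 < ‖z‖) :
    (mu1 z) ^ 2 + cst ∈ Complex.slitPlane := by
  rw [Complex.mem_slitPlane_iff]
  by_contra hc
  push_neg at hc
  obtain ⟨h1, h2⟩ := hc
  have : (mu1 z) ^ 2 + cst = ((((mu1 z) ^ 2 + cst).re : ℝ) : ℂ) := by
    exact (Complex.re_add_im _).symm.trans (by rw [h2]; simp)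
  exact avoids hz ((mu1 z) ^ 2 + cst).re h1 this

lemma re_sqrt_pos {a : ℂ} (ha : a ∈ Complex.slitPlane) :
    0 < (a ^ ((1 : ℂ) / 2)).re := by
  have ha0 : a ≠ 0 := Complex.slitPlane_ne_zero ha
  rw [Complex.cpow_def_of_ne_zero ha0]
  rw [Complex.exp_re]
  have him : (Complex.log a * (1 / 2)).im = a.arg / 2 := by
    simp [Complex.log_im]; ring
  rw [him]
  have harg : |a.arg| < Real.pi :=
    abs_lt.mpr ⟨Complex.neg_pi_lt_arg a,
      lt_of_le_of_ne (Complex.arg_le_pi a) (Complex.slitPlane_arg_ne_pi ha)⟩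
  have hcos : 0 < Real.cos (a.arg / 2) := by
    apply Real.cos_pos_of_mem_Ioo
    constructor
    · have := abs_lt.mp harg
      linarith [this.1, Real.pi_pos]
    · have := abs_lt.mp harg
      linarith [this.2, Real.pi_pos]
  positivity

lemma sqrt_sq {a : ℂ} (ha : a ≠ 0) : (a ^ ((1 : ℂ) / 2)) ^ 2 = a := by
  have : ((1 : ℂ) / 2) = ((2 : ℕ) : ℂ)⁻¹ := by norm_num
  rw [this]
  exact Complex.cpow_nat_inv_pow a two_ne_zero

lemma one_cst_pos : (1 : ℂ) + cst = ((5625 / 296 : ℝ) : ℂ) := by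
  simp [cst]; norm_num

lemma k_real : ((1 : ℂ) + cst) ^ ((1 : ℂ) / 2) = (((5625 / 296 : ℝ) ^ ((1 : ℝ) / 2) : ℝ) : ℂ) := by
  rw [one_cst_pos, Complex.ofReal_cpow (by norm_num : (0:ℝ) ≤ 5625 / 296)]
  norm_num

lemma k_re_pos : 0 < (((1 : ℂ) + cst) ^ ((1 : ℂ) / 2)).re ∧ (((1 : ℂ) + cst) ^ ((1 : ℂ) / 2)).im = 0 := by
  rw [k_real]
  constructor
  · simp only [Complex.ofReal_re]
    positivity
  · simp

lemma k_ne_zero : ((1 : ℂ) + cst) ^ ((1 : ℂ) / 2) ≠ 0 := by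
  intro h
  have := k_re_pos.1
  rw [h] at this
  simp at this

/-- The inner point `u(z) = √(μ₁(z)²+c)/√(1+c)` has positive real part. -/
lemma re_u_pos {z : ℂ} (hz : 1 < ‖z‖) :
    0 < (((mu1 z) ^ 2 + cst) ^ ((1 : ℂ) / 2) / ((1 + cst) ^ ((1 : ℂ) / 2))).re := by
  obtain ⟨hk, hki⟩ := k_re_pos
  rw [Complex.div_re, hki]
  have hs := re_sqrt_pos (mem_slit hz)
  have hknsq : 0 < Complex.normSq (((1:ℂ) + cst) ^ ((1:ℂ)/2)) := Complex.normSq_pos.mpr k_ne_zero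
  rw [← add_div]
  apply div_pos _ hknsq
  nlinarith [mul_pos hs hk]

lemma u_ne_one {z : ℂ} (hz : 1 < ‖z‖) :
    ((mu1 z) ^ 2 + cst) ^ ((1 : ℂ) / 2) / ((1 + cst) ^ ((1 : ℂ) / 2)) ≠ 1 := by
  intro h
  have hs : ((mu1 z) ^ 2 + cst) ^ ((1 : ℂ) / 2) = ((1:ℂ) + cst) ^ ((1:ℂ)/2) := by
    field_simp [k_ne_zero] at h
    exact (div_eq_one_iff_eq k_ne_zero).mp h
  have h2 : (mu1 z) ^ 2 + cst = 1 + cst := by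
    have e1 := sqrt_sq (Complex.slitPlane_ne_zero (mem_slit hz))
    have e2 : (((1:ℂ) + cst) ^ ((1:ℂ)/2)) ^ 2 = 1 + cst := by
      apply sqrt_sq
      rw [one_cst_pos]
      norm_num
    rw [← e1, hs, e2]
  have hsq : (mu1 z) ^ 2 = 1 := by linear_combination h2
  have : (mu1 z - 1) * (mu1 z + 1) = 0 := by ring_nf; linear_combination hsq
  rcases mul_eq_zero.mp this with h' | h'
  · have hm1 : mu1 z = 1 := by linear_combination h'
    have hne : z + 1 ≠ 0 := ne_neg_one_of_abs hz
    rw [mu1] at hm1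
    field_simp at hm1
    have h2 : (2:ℂ) = 0 := by linear_combination -hm1
    norm_num at h2
  · have hm1 : mu1 z = -1 := by linear_combination h'
    have := re_mu1_pos hz
    rw [hm1] at this
    norm_num at this

lemma slit_eq (z : ℂ) :
    slit z = ((((mu1 z) ^ 2 + cst) ^ ((1 : ℂ) / 2)) / ((1 + cst) ^ ((1 : ℂ) / 2)) + 1) /
      ((((mu1 z) ^ 2 + cst) ^ ((1 : ℂ) / 2)) / ((1 + cst) ^ ((1 : ℂ) / 2)) - 1) := rfl

/-- For every `z` with `|z| > 1`, `μ₁(z)² + c` avoids the closed negative real half-line,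
so the slit map is well defined; moreover `φ` is holomorphic and injective on
`Δ = {z : 1 < |z|}` and maps `Δ` into `Δ`. -/
theorem slit_welldefined_holomorphic_injective_mapsTo :
    (∀ z : ℂ, 1 < ‖z‖ → ∀ x : ℝ, x ≤ 0 → (mu1 z) ^ 2 + cst ≠ (x : ℂ)) ∧
    DifferentiableOn ℂ slit {z : ℂ | 1 < ‖z‖} ∧
    Set.InjOn slit {z : ℂ | 1 < ‖z‖} ∧
    Set.MapsTo slit {z : ℂ | 1 < ‖z‖} {z : ℂ | 1 < ‖z‖} := by
  refine ⟨fun z hz => avoids hz, ?_, ?_, ?_⟩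
  · intro z hz
    simp only [Set.mem_setOf_eq] at hz
    have hm : DifferentiableAt ℂ (fun z : ℂ => (mu1 z) ^ 2 + cst) z := by
      have : DifferentiableAt ℂ (fun z : ℂ => ((z - 1) / (z + 1)) ^ 2 + cst) z := by
        apply DifferentiableAt.add_const
        apply DifferentiableAt.pow
        exact DifferentiableAt.div (by fun_prop) (by fun_prop) (ne_neg_one_of_abs hz)
      exact this
    have h2 : DifferentiableAt ℂ (fun z : ℂ => ((mu1 z) ^ 2 + cst) ^ ((1 : ℂ) / 2)) z :=
      hm.cpow (differentiableAt_const _) (mem_slit hz)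
    have h3 : DifferentiableAt ℂ
        (fun z : ℂ => ((mu1 z) ^ 2 + cst) ^ ((1 : ℂ) / 2) / ((1 + cst) ^ ((1 : ℂ) / 2))) z :=
      h2.div_const _
    have h4 : DifferentiableAt ℂ slit z := by
      have := DifferentiableAt.div (h3.add_const 1) (h3.sub_const 1)
        (sub_ne_zero.mpr (u_ne_one hz))
      exact this
    exact h4.differentiableWithinAt
  · intro z₁ h₁ z₂ h₂ heq
    simp only [Set.mem_setOf_eq] at h₁ h₂
    set u₁ := (((mu1 z₁) ^ 2 + cst) ^ ((1 : ℂ) / 2)) / ((1 + cst) ^ ((1 : ℂ) / 2)) with hu₁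
    set u₂ := (((mu1 z₂) ^ 2 + cst) ^ ((1 : ℂ) / 2)) / ((1 + cst) ^ ((1 : ℂ) / 2)) with hu₂
    have d₁ : u₁ - 1 ≠ 0 := sub_ne_zero.mpr (u_ne_one h₁)
    have d₂ : u₂ - 1 ≠ 0 := sub_ne_zero.mpr (u_ne_one h₂)
    have e : (u₁ + 1) / (u₁ - 1) = (u₂ + 1) / (u₂ - 1) := heq
    have hu : u₁ = u₂ := by
      field_simp at e
      linear_combination -e / 2
    have hs : ((mu1 z₁) ^ 2 + cst) ^ ((1 : ℂ) / 2) = ((mu1 z₂) ^ 2 + cst) ^ ((1 : ℂ) / 2) := by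
      rw [hu₁, hu₂] at hu
      field_simp [k_ne_zero] at hu
      exact (div_left_inj' k_ne_zero).mp hu
    have hsq : (mu1 z₁) ^ 2 = (mu1 z₂) ^ 2 := by
      have e₁ := sqrt_sq (Complex.slitPlane_ne_zero (mem_slit h₁))
      have e₂ := sqrt_sq (Complex.slitPlane_ne_zero (mem_slit h₂))
      have : (mu1 z₁) ^ 2 + cst = (mu1 z₂) ^ 2 + cst := by rw [← e₁, ← e₂, hs]
      linear_combination this
    have hw : mu1 z₁ = mu1 z₂ := by
      have hfac : (mu1 z₁ - mu1 z₂) * (mu1 z₁ + mu1 z₂) = 0 := by linear_combination hsq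
      rcases mul_eq_zero.mp hfac with h' | h'
      · linear_combination h'
      · exfalso
        have r₁ := re_mu1_pos h₁
        have r₂ := re_mu1_pos h₂
        have : (mu1 z₁ + mu1 z₂).re = 0 := by rw [h']; simp
        simp only [Complex.add_re] at this
        linarith
    have n₁ := ne_neg_one_of_abs h₁
    have n₂ := ne_neg_one_of_abs h₂
    rw [mu1, mu1] at hw
    field_simp at hw
    linear_combination hw / 2
  · intro z hz
    simp only [Set.mem_setOf_eq] at hz ⊢
    set u := (((mu1 z) ^ 2 + cst) ^ ((1 : ℂ) / 2)) / ((1 + cst) ^ ((1 : ℂ) / 2)) with hu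
    have hre := re_u_pos hz
    have hne : u - 1 ≠ 0 := sub_ne_zero.mpr (u_ne_one hz)
    rw [slit_eq, norm_div]
    rw [lt_div_iff₀ (norm_pos_iff.mpr hne), one_mul]
    apply lt_of_pow_lt_pow_left₀ 2 (norm_nonneg _)
    rw [Complex.sq_norm, Complex.sq_norm, Complex.normSq_apply, Complex.normSq_apply]
    simp only [Complex.sub_re, Complex.add_re, Complex.sub_im, Complex.add_im,
      Complex.one_re, Complex.one_im]
    nlinarith
end

section
/- For every z ∈ ℂ with |z| > 1, the modulus of the logarithmic derivative of the slit map satisfies |φ'(z)| / |φ(z)| = |z − 1| / ( |z| · √( |z − z₁| · |z − z₂| ) ). -/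
open Complex

/-- `z₁ = (−5033 − 292·i·√74)/5625`. -/
noncomputable def z1 : ℂ := (-5033 - 292 * Complex.I * (Real.sqrt 74 : ℂ)) / 5625

/-- `z₂ = (−5033 + 292·i·√74)/5625`. -/
noncomputable def z2 : ℂ := (-5033 + 292 * Complex.I * (Real.sqrt 74 : ℂ)) / 5625

private lemma aux1 (S' t d : ℂ) (hd0 : d ≠ 0) (ht1 : t - 1 ≠ 0) (ht2 : t + 1 ≠ 0) :
    (S'/d*(t-1) - (t+1)*(S'/d))/(t-1)^2/((t+1)/(t-1)) = -2*S'*d/((t*d)^2-d^2) := by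
  rw [show (t*d)^2 - d^2 = d^2*((t-1)*(t+1)) by ring]
  field_simp
  ring

private lemma aux2 (z s d : ℂ) (hB : (-4*z/(z+1)^2 : ℂ) ≠ 0) (hC : z*(z+1)*s ≠ 0)
    (hz1 : z + 1 ≠ 0) (hs0 : s ≠ 0) :
    -2*((z-1)/(z+1)*(2/(z+1)^2)*s/s^2)*d/(-4*z/(z+1)^2) = (z-1)*d/(z*(z+1)*s) := by
  rw [div_eq_div_iff hB hC]
  field_simp
  ring

private lemma aux3 (A K R p q : ℝ) (hR : R ≠ 0) (hp : p ≠ 0) (hq : q ≠ 0) (hK : K ≠ 0) :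
    A * K / (R * p * (K * (q / p))) = A / (R * q) := by
  field_simp

/-- For `|z| > 1`, `|φ'(z)|/|φ(z)| = |z−1| / ( |z| · √(|z−z₁|·|z−z₂|) )`. -/
theorem slit_log_deriv_modulus :
    ∀ z : ℂ, 1 < ‖z‖ →
      ‖deriv slit z‖ / ‖slit z‖ =
        ‖z - 1‖ /
          (‖z‖ * Real.sqrt (‖z - z1‖ * ‖z - z2‖)) := by
  intro z hz
  -- basic nonvanishing
  have hz1 : z + 1 ≠ 0 := by
    intro h
    have : z = -1 := by linear_combination h
    rw [this] at hz; simp at hz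
  have hz0 : z ≠ 0 := by
    intro h; rw [h] at hz; simp at hz
    exact absurd hz (by norm_num)
  have hn1 : 1 < Complex.normSq z := by
    have := Complex.sq_norm z; nlinarith
  have hn2 : 0 < Complex.normSq (z + 1) := Complex.normSq_pos.2 hz1
  -- Re(mu1 z) > 0
  have hure : 0 < (mu1 z).re := by
    rw [mu1, Complex.div_re, ← add_div]
    apply div_pos _ hn2
    simp only [Complex.sub_re, Complex.add_re, Complex.one_re, Complex.sub_im,
      Complex.add_im, Complex.one_im]
    rw [Complex.normSq_apply] at hn1
    nlinarith
  have hcst : cst = ((5329/296 : ℝ) : ℂ) := by norm_num [cst]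
  -- slit plane membership
  have hslitmem : (mu1 z) ^ 2 + cst ∈ Complex.slitPlane := by
    rw [Complex.mem_slitPlane_iff]
    rcases eq_or_ne (mu1 z).im 0 with h | h
    · left
      simp only [Complex.add_re, pow_two, Complex.mul_re, h, hcst, Complex.ofReal_re]
      nlinarith
    · right
      simp only [Complex.add_im, pow_two, Complex.mul_im, hcst, Complex.ofReal_im]
      intro hc
      apply h
      have : (mu1 z).re * (mu1 z).im = 0 := by linarith
      rcases mul_eq_zero.1 this with h1 | h1
      · exact absurd h1 (ne_of_gt hure)
      · exact h1
  have hne : (mu1 z) ^ 2 + cst ≠ 0 := Complex.slitPlane_ne_zero hslitmem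
  have h1c : (1 : ℂ) + cst ≠ 0 := by
    rw [hcst]; intro h
    have := congrArg Complex.re h
    simp at this
    norm_num at this
  set d : ℂ := ((1 : ℂ) + cst) ^ ((1:ℂ)/2) with hd_def
  set s : ℂ := ((mu1 z) ^ 2 + cst) ^ ((1:ℂ)/2) with hs_def
  have hd2 : d ^ 2 = 1 + cst := by
    rw [hd_def, sq, ← Complex.cpow_add _ _ h1c]
    norm_num
  have hs2 : s ^ 2 = (mu1 z) ^ 2 + cst := by
    rw [hs_def, sq, ← Complex.cpow_add _ _ hne]
    norm_num
  have hd0 : d ≠ 0 := by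
    intro h; exact h1c (by rw [← hd2, h]; ring)
  have hs0 : s ≠ 0 := by
    intro h; exact hne (by rw [← hs2, h]; ring)
  -- u^2 - 1 = -4z/(z+1)^2
  have hum : (mu1 z) ^ 2 - 1 = -4 * z / (z+1)^2 := by
    rw [mu1]; field_simp; ring
  have hum0 : (mu1 z) ^ 2 - 1 ≠ 0 := by
    rw [hum, div_ne_zero_iff]
    constructor
    · intro h
      apply hz0
      linear_combination (-1/4 : ℂ) * h
    · exact pow_ne_zero 2 hz1
  have hsd2eq : s ^ 2 - d ^ 2 = -4 * z / (z+1)^2 := by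
    rw [hs2, hd2, ← hum]; ring
  have hsdne : s ^ 2 - d ^ 2 ≠ 0 := by
    rw [hsd2eq, ← hum]; exact hum0
  have hsd : s / d - 1 ≠ 0 := by
    intro h
    apply hsdne
    have hsd' : s = d := by
      have h2 := h
      field_simp at h2
      linear_combination h2
    rw [hsd']; ring
  have hsdp : s / d + 1 ≠ 0 := by
    intro h
    apply hsdne
    have hsd' : s = -d := by
      field_simp at h
      linear_combination h
    rw [hsd']; ring
  -- derivative of mu1
  have hu' : HasDerivAt mu1 (2/(z+1)^2) z := by
    have h := ((hasDerivAt_id z).sub_const 1).div ((hasDerivAt_id z).add_const 1) hz1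
    have heq : mu1 = fun y => (y - 1) / (y + 1) := by funext y; rw [mu1]
    rw [heq]
    refine h.congr_deriv ?_
    simp only [id]
    field_simp
    ring
  have hS : HasDerivAt (fun y => (mu1 y) ^ 2 + cst) (2 * mu1 z * (2/(z+1)^2)) z := by
    have := (hu'.pow 2).add_const cst
    refine this.congr_deriv ?_
    push_cast
    ring
  have hScpow : HasDerivAt (fun y => ((mu1 y) ^ 2 + cst) ^ ((1:ℂ)/2))
      ((1:ℂ)/2 * ((mu1 z) ^ 2 + cst) ^ ((1:ℂ)/2 - 1) * (2 * mu1 z * (2/(z+1)^2))) z :=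
    hS.cpow_const hslitmem
  have hpow : ((mu1 z) ^ 2 + cst) ^ ((1:ℂ)/2 - 1) = s / ((mu1 z) ^ 2 + cst) := by
    rw [show (1:ℂ)/2 - 1 = 1/2 + (-1) by ring, Complex.cpow_add _ _ hne,
      Complex.cpow_neg, Complex.cpow_one, ← hs_def, div_eq_mul_inv]
  have hS2 : HasDerivAt (fun y => ((mu1 y) ^ 2 + cst) ^ ((1:ℂ)/2))
      (mu1 z * (2/(z+1)^2) * s / s ^ 2) z := by
    convert hScpow using 1
    rw [hpow, ← hs2]
    ring
  obtain ⟨S', hS'_def, hS2'⟩ :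
      ∃ S' : ℂ, S' = mu1 z * (2/(z+1)^2) * s / s ^ 2 ∧
        HasDerivAt (fun y => ((mu1 y) ^ 2 + cst) ^ ((1:ℂ)/2)) S' z := ⟨_, rfl, hS2⟩
  have hslitfun : slit = fun y => ((((mu1 y) ^ 2 + cst) ^ ((1:ℂ)/2)) / d + 1) /
      ((((mu1 y) ^ 2 + cst) ^ ((1:ℂ)/2)) / d - 1) := by
    funext y; rw [slit, mu2]
  have hderivS : HasDerivAt slit
      ((S'/d * (s/d - 1) - (s/d + 1) * (S'/d)) / (s/d - 1)^2) z := by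
    rw [hslitfun]
    exact ((hS2'.div_const d).add_const 1).div ((hS2'.div_const d).sub_const 1) hsd
  have hderiv : deriv slit z = (S'/d * (s/d - 1) - (s/d + 1) * (S'/d)) / (s/d - 1)^2 :=
    hderivS.deriv
  have hslitval : slit z = (s/d + 1) / (s/d - 1) := by rw [slit, mu2]
  have hu : mu1 z = (z - 1)/(z + 1) := rfl
  -- the log-derivative ratio
  have hQ2 : deriv slit z / slit z = (z - 1) * d / (z * (z+1) * s) := by
    rw [hderiv, hslitval]
    have e1 := aux1 S' (s/d) d hd0 hsd hsdp
    rw [div_mul_cancel₀ s hd0] at e1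
    rw [e1, hS'_def, hsd2eq, hu]
    exact aux2 z s d (by rw [← hsd2eq]; exact hsdne)
      (mul_ne_zero (mul_ne_zero hz0 hz1) hs0) hz1 hs0
  -- absolute values
  have habs_1c : ‖1 + cst‖ = 5625/296 := by
    rw [show (1 : ℂ) + cst = ((5625/296 : ℝ) : ℂ) by rw [hcst]; norm_num,
      Complex.norm_real]
    norm_num
  have hz12 : (z - z1) * (z - z2) = z^2 + (10066/5625) * z + 1 := by
    rw [z1, z2]
    have h74 : ((Real.sqrt 74 : ℝ) : ℂ) ^ 2 = 74 := by
      rw [← Complex.ofReal_pow, Real.sq_sqrt (by norm_num : (0:ℝ) ≤ 74)]; norm_num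
    linear_combination ((-85264 : ℂ)/31640625) * ((Real.sqrt 74 : ℝ) : ℂ)^2 * Complex.I_sq
      + ((85264 : ℂ)/31640625) * h74
  have hfact : (mu1 z) ^ 2 + cst = (1 + cst) * ((z - z1) * (z - z2)) / (z+1)^2 := by
    rw [hz12, hu, hcst]
    field_simp
    push_cast
    ring
  have habs_us : ‖(mu1 z) ^ 2 + cst‖
      = (5625/296) * (‖z - z1‖ * ‖z - z2‖) / ‖z+1‖ ^ 2 := by
    rw [hfact, norm_div, norm_mul, norm_mul, norm_pow, habs_1c]
  have hd_abs : ‖d‖ = Real.sqrt (5625/296) := by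
    rw [show ‖d‖ = Real.sqrt (‖d‖ ^ 2) from
      (Real.sqrt_sq (norm_nonneg d)).symm, ← norm_pow, hd2, habs_1c]
  have hs_abs : ‖s‖ = Real.sqrt ((5625/296) * (‖z - z1‖ *
      ‖z - z2‖) / ‖z+1‖ ^ 2) := by
    rw [show ‖s‖ = Real.sqrt (‖s‖ ^ 2) from
      (Real.sqrt_sq (norm_nonneg s)).symm, ← norm_pow, hs2, habs_us]
  -- positivity facts
  have hpz1 : 0 < ‖z + 1‖ := norm_pos_iff.mpr hz1
  have hpz : 0 < ‖z‖ := norm_pos_iff.mpr hz0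
  have hab : 0 < ‖z - z1‖ * ‖z - z2‖ := by
    have h0 : 0 < ‖(mu1 z) ^ 2 + cst‖ := norm_pos_iff.mpr hne
    rw [habs_us] at h0
    by_contra h
    push_neg at h
    have hnn : 0 ≤ ‖z - z1‖ * ‖z - z2‖ :=
      mul_nonneg (norm_nonneg _) (norm_nonneg _)
    have : ‖z - z1‖ * ‖z - z2‖ = 0 := le_antisymm h hnn
    rw [this] at h0
    simp at h0
  rw [← norm_div, hQ2, norm_div, norm_mul, norm_mul, norm_mul, hd_abs, hs_abs]
  rw [show (5625/296 : ℝ) * (‖z - z1‖ * ‖z - z2‖) / ‖z+1‖ ^ 2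
      = (5625/296) * ((‖z - z1‖ * ‖z - z2‖) / ‖z+1‖ ^ 2) by
        ring,
    Real.sqrt_mul (by norm_num : (0:ℝ) ≤ 5625/296),
    Real.sqrt_div (le_of_lt hab), Real.sqrt_sq (le_of_lt hpz1)]
  have hsab : 0 < Real.sqrt (‖z - z1‖ * ‖z - z2‖) :=
    Real.sqrt_pos.2 hab
  have hsK : 0 < Real.sqrt ((5625:ℝ)/296) := Real.sqrt_pos.2 (by norm_num)
  exact aux3 _ _ _ _ _ hpz.ne' hpz1.ne' hsab.ne' hsK.ne'
end

section
/- For every r > 1 and θ ∈ ℝ, writing z = r e^{iθ}, the radial derivative of |z−1| / √(|z−z₁|·|z−z₂|) satisfies the identity ∂/∂r [ |z−1| / √(|z−z₁|·|z−z₂|) ] = −(r²−1) · ( 2r(x−1)cos²θ + (r²+1)(x−1)cosθ + 2ry² ) / ( |z−1| · |z−z₁|^{5/2} · |z−z₂|^{5/2} ). -/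
open Complex

/-- `x = −5033/5625`, the real part of `z₁`. -/
noncomputable def xr : ℝ := -5033 / 5625

/-- `y = −292·√74/5625`, the imaginary part of `z₁`. -/
noncomputable def yr : ℝ := -292 * Real.sqrt 74 / 5625

lemma aux_alg (Ar Br Cr Ad Nd N sa sk qk : ℝ) (hane : sa ≠ 0) (hkne : sk ≠ 0) (hqne : qk ≠ 0)
    (ha2 : sa ^ 2 = Ar) (hk2 : sk ^ 2 = Br * Cr) (hq2 : qk ^ 2 = sk)
    (hpoly : 2 * Ad * (Br * Cr) - Ar * Nd = 4 * N) :
    N / (sa * (Br * Cr) * qk) = (Ad / (2 * sa) * qk - sa * (Nd / (2 * sk) / (2 * qk))) / qk ^ 2 := by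
  have hK : Br * Cr ≠ 0 := by rw [← hk2]; exact pow_ne_zero _ hkne
  have hBr : Br ≠ 0 := left_ne_zero_of_mul hK
  have hCr : Cr ≠ 0 := right_ne_zero_of_mul hK
  field_simp
  linear_combination (4*N*sk - 2*(Br*Cr)*Ad*sk) * hq2 + (4*N - 2*(Br*Cr)*Ad) * hk2
    + (Br*Cr)*Nd * ha2 - (Br*Cr) * hpoly

/-- The radial derivative identity for `|z−1| / √(|z−z₁|·|z−z₂|)`, `z = r e^{iθ}`. -/
theorem radial_derivative_identity :
    ∀ r : ℝ, 1 < r → ∀ θ : ℝ,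
      HasDerivAt
        (fun ρ : ℝ =>
          ‖(ρ : ℂ) * Complex.exp (θ * Complex.I) - 1‖ /
            Real.sqrt (‖(ρ : ℂ) * Complex.exp (θ * Complex.I) - z1‖ *
              ‖(ρ : ℂ) * Complex.exp (θ * Complex.I) - z2‖))
        (-(r ^ 2 - 1) *
            (2 * r * (xr - 1) * Real.cos θ ^ 2 + (r ^ 2 + 1) * (xr - 1) * Real.cos θ +
              2 * r * yr ^ 2) /
          (‖(r : ℂ) * Complex.exp (θ * Complex.I) - 1‖ *
            ‖(r : ℂ) * Complex.exp (θ * Complex.I) - z1‖ ^ ((5 : ℝ) / 2) *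
            ‖(r : ℂ) * Complex.exp (θ * Complex.I) - z2‖ ^ ((5 : ℝ) / 2)))
        r := by
  intro r hr θ
  set c := Real.cos θ with hc
  set s := Real.sin θ with hs
  have hcs : s ^ 2 + c ^ 2 = 1 := Real.sin_sq_add_cos_sq θ
  set x : ℝ := xr with hxdef
  set y : ℝ := yr with hydef
  have hy2 : y ^ 2 = 6309536 / 31640625 := by
    rw [hydef, yr, div_pow, mul_pow, Real.sq_sqrt (by norm_num : (74:ℝ) ≥ 0)]
    norm_num
  have hxv : x = -5033 / 5625 := rfl
  have hxy : x ^ 2 + y ^ 2 = 1 := by rw [hy2, hxv]; norm_num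
  -- complex rewrites
  have hexp : Complex.exp (θ * Complex.I) = (c : ℂ) + (s : ℂ) * Complex.I := by
    rw [Complex.exp_mul_I, hc, hs]
    push_cast
    ring
  have habs : ∀ (a b ρ : ℝ),
      ‖(ρ : ℂ) * Complex.exp (θ * Complex.I) - ((a:ℂ) + (b:ℂ) * Complex.I)‖ =
        Real.sqrt ((ρ * c - a) ^ 2 + (ρ * s - b) ^ 2) := by
    intro a b ρ
    rw [Complex.norm_def]
    congr 1
    rw [hexp]
    simp [Complex.normSq_apply]
    ring
  have hz1 : z1 = (x:ℂ) + (y:ℂ) * Complex.I := by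
    rw [z1, hxdef, hydef, xr, yr]
    push_cast
    ring
  have hz2 : z2 = (x:ℂ) + ((-y:ℝ):ℂ) * Complex.I := by
    rw [z2, hxdef, hydef, xr, yr]
    push_cast
    ring
  have hone : (1:ℂ) = ((1:ℝ):ℂ) + ((0:ℝ):ℂ) * Complex.I := by push_cast; ring
  -- real functions
  set A : ℝ → ℝ := fun ρ => (ρ * c - 1) ^ 2 + (ρ * s - 0) ^ 2 with hA
  set B : ℝ → ℝ := fun ρ => (ρ * c - x) ^ 2 + (ρ * s - y) ^ 2 with hB
  set C : ℝ → ℝ := fun ρ => (ρ * c - x) ^ 2 + (ρ * s - -y) ^ 2 with hC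
  have habs1 : ∀ ρ : ℝ, ‖(ρ : ℂ) * Complex.exp (θ * Complex.I) - 1‖
      = Real.sqrt (A ρ) := fun ρ => by rw [hone]; exact habs 1 0 ρ
  have habsB : ∀ ρ : ℝ, ‖(ρ : ℂ) * Complex.exp (θ * Complex.I) - z1‖
      = Real.sqrt (B ρ) := fun ρ => by rw [hz1]; exact habs x y ρ
  have habsC : ∀ ρ : ℝ, ‖(ρ : ℂ) * Complex.exp (θ * Complex.I) - z2‖
      = Real.sqrt (C ρ) := fun ρ => by rw [hz2]; exact habs x (-y) ρ
  have hBnn : ∀ ρ : ℝ, 0 ≤ B ρ := fun ρ => by positivity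
  have hfun : (fun ρ : ℝ =>
      ‖(ρ : ℂ) * Complex.exp (θ * Complex.I) - 1‖ /
        Real.sqrt (‖(ρ : ℂ) * Complex.exp (θ * Complex.I) - z1‖ *
          ‖(ρ : ℂ) * Complex.exp (θ * Complex.I) - z2‖))
      = fun ρ : ℝ => Real.sqrt (A ρ) / Real.sqrt (Real.sqrt (B ρ * C ρ)) := by
    funext ρ
    rw [habs1, habsB, habsC, ← Real.sqrt_mul (hBnn ρ)]
  rw [hfun]
  -- positivity at r
  have hApos : 0 < A r := by
    have h1 : c ≤ 1 := Real.cos_le_one θ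
    simp only [hA]
    nlinarith [sq_nonneg (r*s), sq_nonneg (r - 1)]
  have hprod : (x^2 + y^2) * (s^2 + c^2) = 1 := by rw [hxy, hcs, mul_one]
  have ht1 : x * c + y * s ≤ 1 := by
    nlinarith [sq_nonneg (x*s - y*c), sq_nonneg (x*c + y*s - 1), hprod]
  have ht2 : x * c - y * s ≤ 1 := by
    nlinarith [sq_nonneg (x*s + y*c), sq_nonneg (x*c - y*s - 1), hprod]
  have hBpos : 0 < B r := by
    simp only [hB]
    nlinarith [mul_nonneg (by linarith : (0:ℝ) ≤ r) (by linarith : (0:ℝ) ≤ 1 - (x*c + y*s)),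
      sq_nonneg (r - 1), hprod]
  have hCpos : 0 < C r := by
    simp only [hC]
    nlinarith [mul_nonneg (by linarith : (0:ℝ) ≤ r) (by linarith : (0:ℝ) ≤ 1 - (x*c - y*s)),
      sq_nonneg (r - 1), hprod]
  have hKpos : 0 < B r * C r := mul_pos hBpos hCpos
  have hsApos : 0 < Real.sqrt (A r) := Real.sqrt_pos.mpr hApos
  have hsKpos : 0 < Real.sqrt (B r * C r) := Real.sqrt_pos.mpr hKpos
  have hqKpos : 0 < Real.sqrt (Real.sqrt (B r * C r)) := Real.sqrt_pos.mpr hsKpos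
  -- derivatives
  have hA' : HasDerivAt A (2 * r - 2 * c) r := by
    have h1 : HasDerivAt (fun ρ : ℝ => ρ * c - 1) c r := by
      simpa using ((hasDerivAt_id r).mul_const c).sub_const 1
    have h2 : HasDerivAt (fun ρ : ℝ => ρ * s - 0) s r := by
      simpa using ((hasDerivAt_id r).mul_const s).sub_const 0
    have := (h1.pow 2).add (h2.pow 2)
    refine this.congr_deriv ?_
    push_cast
    linear_combination (2 * r) * hcs
  have hB' : HasDerivAt B (2 * r - 2 * (x * c + y * s)) r := by
    have h1 : HasDerivAt (fun ρ : ℝ => ρ * c - x) c r := by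
      simpa using ((hasDerivAt_id r).mul_const c).sub_const x
    have h2 : HasDerivAt (fun ρ : ℝ => ρ * s - y) s r := by
      simpa using ((hasDerivAt_id r).mul_const s).sub_const y
    have := (h1.pow 2).add (h2.pow 2)
    refine this.congr_deriv ?_
    push_cast
    linear_combination (2 * r) * hcs
  have hC' : HasDerivAt C (2 * r - 2 * (x * c - y * s)) r := by
    have h1 : HasDerivAt (fun ρ : ℝ => ρ * c - x) c r := by
      simpa using ((hasDerivAt_id r).mul_const c).sub_const x
    have h2 : HasDerivAt (fun ρ : ℝ => ρ * s - -y) s r := by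
      simpa using ((hasDerivAt_id r).mul_const s).sub_const (-y)
    have := (h1.pow 2).add (h2.pow 2)
    refine this.congr_deriv ?_
    push_cast
    linear_combination (2 * r) * hcs
  have hK' : HasDerivAt (fun ρ => B ρ * C ρ)
      ((2 * r - 2 * (x * c + y * s)) * C r + B r * (2 * r - 2 * (x * c - y * s))) r :=
    hB'.mul hC'
  have hsA' := hA'.sqrt hApos.ne'
  have hqK' := (hK'.sqrt hKpos.ne').sqrt hsKpos.ne'
  have hf := hsA'.div hqK' hqKpos.ne'
  have hval : (-(r ^ 2 - 1) *
            (2 * r * (x - 1) * c ^ 2 + (r ^ 2 + 1) * (x - 1) * c +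
              2 * r * y ^ 2) /
          (Real.sqrt (A r) *
            Real.sqrt (B r) ^ ((5 : ℝ) / 2) *
            Real.sqrt (C r) ^ ((5 : ℝ) / 2)))
      = ((2 * r - 2 * c) / (2 * Real.sqrt (A r)) * Real.sqrt (Real.sqrt (B r * C r)) -
          Real.sqrt (A r) *
            (((2 * r - 2 * (x * c + y * s)) * C r + B r * (2 * r - 2 * (x * c - y * s))) /
                (2 * Real.sqrt (B r * C r)) /
              (2 * Real.sqrt (Real.sqrt (B r * C r))))) /
          Real.sqrt (Real.sqrt (B r * C r)) ^ 2 := by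
    have e5 : ∀ t : ℝ, 0 < t → Real.sqrt t ^ ((5:ℝ)/2) = t * Real.sqrt (Real.sqrt t) := by
      intro t ht
      rw [show ((5:ℝ)/2) = (2:ℝ) + 1/2 from by norm_num, Real.rpow_add (Real.sqrt_pos.mpr ht),
        ← Real.sqrt_eq_rpow, show ((2:ℝ)) = ((2:ℕ):ℝ) from by norm_num, Real.rpow_natCast,
        Real.sq_sqrt ht.le]
    rw [e5 _ hBpos, e5 _ hCpos]
    have hq : Real.sqrt (Real.sqrt (B r)) * Real.sqrt (Real.sqrt (C r))
        = Real.sqrt (Real.sqrt (B r * C r)) := by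
      rw [← Real.sqrt_mul (Real.sqrt_nonneg _), ← Real.sqrt_mul (hBnn r)]
    have hden : Real.sqrt (A r) * (B r * Real.sqrt (Real.sqrt (B r))) *
        (C r * Real.sqrt (Real.sqrt (C r)))
        = Real.sqrt (A r) * (B r * C r) * Real.sqrt (Real.sqrt (B r * C r)) := by
      rw [← hq]; ring
    rw [hden]
    have ha2 : Real.sqrt (A r) ^ 2 = A r := Real.sq_sqrt hApos.le
    have hk2 : Real.sqrt (B r * C r) ^ 2 = B r * C r := Real.sq_sqrt hKpos.le
    have hq2 : Real.sqrt (Real.sqrt (B r * C r)) ^ 2 = Real.sqrt (B r * C r) :=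
      Real.sq_sqrt hsKpos.le
    have hpoly : 2*(2*r - 2*c)*(B r * C r)
        - A r * ((2*r - 2*(x*c + y*s))*(C r) + (B r)*(2*r - 2*(x*c - y*s)))
        = -4*(r^2-1)*(2*r*(x-1)*c^2 + (r^2+1)*(x-1)*c + 2*r*y^2) := by
      simp only [hA, hB, hC]
      linear_combination ((-4)*c + 4*c*x + (-4)*c*x^2 + (-4)*c*y^2 + (-8)*r + 4*r*x^2
          + 4*r*y^2 + 8*r*s^2 + 8*r*c^2*x + 8*r^2*c + (-16)*r^2*c*x + (-8)*r^2*c*s^2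
          + 4*r^2*c*s^2*x + (-8)*r^2*c^3 + 4*r^2*c^3*x + 8*r^3 + (-12)*r^3*s^2
          + 8*r^3*s^4 + 4*r^3*c^2 + 8*r^3*c^2*s^2) * hxy
        + (8*r + (-8)*r*x^2 + (-8)*r^2*c + 8*r^2*c*x + (-8)*r^3 + 8*r^3*x^2 + 8*r^3*s^2
          + (-8)*r^3*s^2*x^2 + 8*r^3*c^2*x + (-8)*r^3*c^2*x^2 + 4*r^4*c + (-4)*r^4*c*x
          + (-4)*r^4*c*s^2 + 4*r^4*c*s^2*x + (-4)*r^4*c^3 + 4*r^4*c^3*x) * hcs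
    exact aux_alg (A r) (B r) (C r) (2*r - 2*c)
      ((2*r - 2*(x*c + y*s)) * C r + B r * (2*r - 2*(x*c - y*s)))
      (-(r ^ 2 - 1) * (2 * r * (x - 1) * c ^ 2 + (r ^ 2 + 1) * (x - 1) * c + 2 * r * y ^ 2))
      (Real.sqrt (A r)) (Real.sqrt (B r * C r)) (Real.sqrt (Real.sqrt (B r * C r)))
      hsApos.ne' hsKpos.ne' hqKpos.ne' ha2 hk2 hq2 (by linear_combination hpoly)
  rw [habs1, habsB, habsC, hval]
  exact hf
end

section
/- For every r with 1 < r ≤ 1.4 and every θ with 1.48 ≤ |θ| ≤ π, writing z = r e^{iθ}, the radial derivative satisfies ∂/∂r [ |z−1| / √(|z−z₁|·|z−z₂|) ] ≤ 0. -/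
set_option maxHeartbeats 1000000


open Complex

lemma myAbs_eq (θ ρ x y : ℝ) :
    ‖(ρ : ℂ) * Complex.exp (θ * Complex.I) - (↑x + ↑y * Complex.I)‖ =
      Real.sqrt (ρ^2 - 2*(x*Real.cos θ + y*Real.sin θ)*ρ + (x^2+y^2)) := by
  rw [Complex.norm_def, Complex.normSq_apply]
  simp [Complex.exp_mul_I, Complex.mul_re, Complex.mul_im,
    Complex.cos_ofReal_re, Complex.sin_ofReal_re]
  congr 1
  have h := Real.sin_sq_add_cos_sq θ
  ring_nf
  nlinarith [h]

lemma hasDerivAt_quad (t r : ℝ) :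
    HasDerivAt (fun ρ : ℝ => ρ^2 - 2*t*ρ + 1) (2*r - 2*t) r := by
  have h := ((hasDerivAt_pow 2 r).sub ((hasDerivAt_id r).const_mul (2*t))).add_const 1
  norm_num at h
  exact h.add_const 1

/-- For `1 < r ≤ 1.4` and `1.48 ≤ |θ| ≤ π`, the radial derivative of
`|z−1| / √(|z−z₁|·|z−z₂|)` at `z = r e^{iθ}` is nonpositive. -/
theorem radial_derivative_nonpos :
    ∀ r : ℝ, 1 < r → r ≤ 1.4 → ∀ θ : ℝ, 1.48 ≤ |θ| → |θ| ≤ Real.pi →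
      deriv
        (fun ρ : ℝ =>
          ‖(ρ : ℂ) * Complex.exp (θ * Complex.I) - 1‖ /
            Real.sqrt (‖(ρ : ℂ) * Complex.exp (θ * Complex.I) - z1‖ *
              ‖(ρ : ℂ) * Complex.exp (θ * Complex.I) - z2‖)) r ≤ 0 := by
  intro r hr1 hr14 θ hθ1 hθ2
  norm_num at hr14
  set c : ℝ := Real.cos θ with hc
  set s : ℝ := Real.sin θ with hs
  set k : ℝ := -5033/5625 with hk
  set m : ℝ := 292*Real.sqrt 74/5625 with hm
  have h74 : Real.sqrt 74 ^ 2 = 74 := Real.sq_sqrt (by norm_num)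
  have hkm : k^2 + m^2 = 1 := by
    rw [hk, hm]; linear_combination (85264/31640625) * h74
  have hm2 : m^2 = 6309536/31640625 := by
    rw [hm]; linear_combination (85264/31640625) * h74
  have hcs : s^2 + c^2 = 1 := Real.sin_sq_add_cos_sq θ
  set p : ℝ := k*c + -m*s with hp
  set q : ℝ := k*c + m*s with hq
  -- bounds on c
  have hcle : c ≤ 227/2500 := by
    rcases le_or_gt (Real.pi/2) |θ| with h | h
    · have := Real.cos_nonpos_of_pi_div_two_le_of_le h
        (by linarith [Real.pi_pos] : |θ| ≤ Real.pi + Real.pi / 2)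
      rw [hc, ← Real.cos_abs θ]; linarith
    · have h1 : c = Real.sin (Real.pi/2 - |θ|) := by
        rw [Real.sin_pi_div_two_sub, hc, Real.cos_abs]
      have h2 : Real.sin (Real.pi/2 - |θ|) ≤ Real.pi/2 - |θ| :=
        Real.sin_le (by linarith)
      have hpi := Real.pi_lt_d6
      rw [h1]
      have : (1.48 : ℝ) ≤ |θ| := hθ1
      linarith
  have hcge : -1 ≤ c := Real.neg_one_le_cos θ
  -- bounds on p, q
  have hple : p ≤ 1 := by
    rw [hp]; nlinarith [hkm, hcs, sq_nonneg (k*s + m*c), sq_nonneg (k*c - m*s - 1)]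
  have hqle : q ≤ 1 := by
    rw [hq]; nlinarith [hkm, hcs, sq_nonneg (k*s - m*c), sq_nonneg (k*c + m*s - 1)]
  -- positivity of the three quadratics at r
  have hA0 : (0:ℝ) < r^2 - 2*c*r + 1 := by nlinarith [Real.cos_le_one θ]
  have hB10 : (0:ℝ) < r^2 - 2*p*r + 1 := by nlinarith
  have hB20 : (0:ℝ) < r^2 - 2*q*r + 1 := by nlinarith
  -- rewrite the function
  have hfun : (fun ρ : ℝ =>
          ‖(ρ : ℂ) * Complex.exp (θ * Complex.I) - 1‖ /
            Real.sqrt (‖(ρ : ℂ) * Complex.exp (θ * Complex.I) - z1‖ *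
              ‖(ρ : ℂ) * Complex.exp (θ * Complex.I) - z2‖))
      = (fun ρ : ℝ => Real.sqrt (ρ^2 - 2*c*ρ + 1) /
          Real.sqrt (Real.sqrt (ρ^2 - 2*p*ρ + 1) * Real.sqrt (ρ^2 - 2*q*ρ + 1))) := by
    funext ρ
    have h1 : (1:ℂ) = (↑(1:ℝ) + ↑(0:ℝ) * Complex.I) := by norm_num
    have hz1 : z1 = (↑k + ↑(-m) * Complex.I) := by
      simp only [z1, hk, hm]; push_cast; ring
    have hz2 : z2 = (↑k + ↑m * Complex.I) := by
      simp only [z2, hk, hm]; push_cast; ring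
    rw [h1, hz1, hz2, myAbs_eq, myAbs_eq, myAbs_eq]
    have e1 : ρ^2 - 2*((1:ℝ)*c + 0*s)*ρ + ((1:ℝ)^2+0^2) = ρ^2 - 2*c*ρ + 1 := by ring
    have e2 : ρ^2 - 2*(k*c + (-m)*s)*ρ + (k^2+(-m)^2) = ρ^2 - 2*p*ρ + 1 := by
      rw [hp]; linear_combination hkm
    have e3 : ρ^2 - 2*(k*c + m*s)*ρ + (k^2+m^2) = ρ^2 - 2*q*ρ + 1 := by
      rw [hq]; linear_combination hkm
    rw [e1, e2, e3]
  rw [hfun]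
  clear hfun
  clear_value p q c s k m
  -- the derivative
  have hsA : HasDerivAt (fun ρ:ℝ => Real.sqrt (ρ^2 - 2*c*ρ + 1))
      ((2*r-2*c)/(2*Real.sqrt (r^2 - 2*c*r + 1))) r := (hasDerivAt_quad c r).sqrt hA0.ne'
  have hsB1 : HasDerivAt (fun ρ:ℝ => Real.sqrt (ρ^2 - 2*p*ρ + 1))
      ((2*r-2*p)/(2*Real.sqrt (r^2 - 2*p*r + 1))) r := (hasDerivAt_quad p r).sqrt hB10.ne'
  have hsB2 : HasDerivAt (fun ρ:ℝ => Real.sqrt (ρ^2 - 2*q*ρ + 1))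
      ((2*r-2*q)/(2*Real.sqrt (r^2 - 2*q*r + 1))) r := (hasDerivAt_quad q r).sqrt hB20.ne'
  have hb10 : 0 < Real.sqrt (r^2 - 2*p*r + 1) := Real.sqrt_pos.2 hB10
  have hb20 : 0 < Real.sqrt (r^2 - 2*q*r + 1) := Real.sqrt_pos.2 hB20
  have hprod : HasDerivAt (fun ρ:ℝ => Real.sqrt (ρ^2 - 2*p*ρ + 1) * Real.sqrt (ρ^2 - 2*q*ρ + 1))
      _ r := hsB1.mul hsB2
  have hsd := hprod.sqrt (mul_pos hb10 hb20).ne'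
  have hdiv : HasDerivAt (fun ρ:ℝ => Real.sqrt (ρ^2 - 2*c*ρ + 1) /
      Real.sqrt (Real.sqrt (ρ^2 - 2*p*ρ + 1) * Real.sqrt (ρ^2 - 2*q*ρ + 1))) _ r := hsA.div hsd (Real.sqrt_pos.2 (mul_pos hb10 hb20)).ne'
  rw [hdiv.deriv]
  set b1 := Real.sqrt (r^2 - 2*p*r + 1) with hb1
  set b2 := Real.sqrt (r^2 - 2*q*r + 1) with hb2
  set a := Real.sqrt (r^2 - 2*c*r + 1) with ha
  set d := Real.sqrt (b1 * b2) with hd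
  have ha0 : 0 < a := Real.sqrt_pos.2 hA0
  have hd0 : 0 < d := Real.sqrt_pos.2 (mul_pos hb10 hb20)
  have ha2 : a^2 = r^2 - 2*c*r + 1 := Real.sq_sqrt hA0.le
  have hb12 : b1^2 = r^2 - 2*p*r + 1 := Real.sq_sqrt hB10.le
  have hb22 : b2^2 = r^2 - 2*q*r + 1 := Real.sq_sqrt hB20.le
  have hd2 : d^2 = b1 * b2 := Real.sq_sqrt (mul_pos hb10 hb20).le
  -- the key polynomial inequality
  have hrsq : (0:ℝ) ≤ r^2 - 1 := by
    have h : (1:ℝ)^2 ≤ r^2 := pow_le_pow_left₀ (by norm_num) hr1.le 2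
    linarith [h]
  have hq1 : 0 ≤ (c+1)*(227/2500-c)*r :=
    mul_nonneg (mul_nonneg (by linarith) (by linarith)) (by linarith)
  have hquad : 0 ≤ 239805000*r^2 - 436061412*r + 239805000 := by
    nlinarith [sq_nonneg (479610000*r - 436061412)]
  have hq2 : 0 ≤ (227/2500-c)*(239805000*r^2 - 436061412*r + 239805000) :=
    mul_nonneg (by linarith) hquad
  have hq3 : (0:ℝ) ≤ (r-1)*(7/5-r) := mul_nonneg (by linarith) (by linarith)
  have hE : 0 ≤ 50476288*r - 239805000*c*(r^2+1) - 479610000*c^2*r := by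
    linarith [hq1, hq2, hq3, hr14]
  have hident : (r^2-2*c*r+1)*((2*r-2*p)*(r^2-2*q*r+1) + (r^2-2*p*r+1)*(2*r-2*q))
        - 2*(2*r-2*c)*((r^2-2*p*r+1)*(r^2-2*q*r+1))
      = (r^2-1)*(50476288*r - 239805000*c*(r^2+1) - 479610000*c^2*r)/31640625 := by
    rw [hp, hq, hk]
    linear_combination (8*r^3*s^2 - 8*r*s^2) * hm2 + (50476288/31640625)*(r^3 - r) * hcs
  have key : 2*(2*r-2*c)*((r^2-2*p*r+1)*(r^2-2*q*r+1))
      ≤ (r^2-2*c*r+1)*((2*r-2*p)*(r^2-2*q*r+1) + (r^2-2*p*r+1)*(2*r-2*q)) := by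
    have h1 : 0 ≤ (r^2-1)*(50476288*r - 239805000*c*(r^2+1) - 479610000*c^2*r)/31640625 :=
      div_nonneg (mul_nonneg hrsq hE) (by norm_num)
    linarith [hident, h1]
  -- conclude
  apply div_nonpos_of_nonpos_of_nonneg _ (sq_nonneg d)
  have expand : (2*r-2*c)/(2*a)*d - a*(((2*r-2*p)/(2*b1)*b2 + b1*((2*r-2*q)/(2*b2)))/(2*d))
      = (2*(2*r-2*c)*(b1*b2)*d^2 - a^2*((2*r-2*p)*b2^2 + b1^2*(2*r-2*q)))/(4*a*b1*b2*d) := by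
    field_simp
    ring
  rw [expand]
  apply div_nonpos_of_nonpos_of_nonneg _ (by positivity)
  have e : 2*(2*r-2*c)*(b1*b2)*d^2 - a^2*((2*r-2*p)*b2^2 + b1^2*(2*r-2*q))
      = 2*(2*r-2*c)*(b1^2*b2^2) - a^2*((2*r-2*p)*b2^2 + b1^2*(2*r-2*q)) := by
    rw [hd2]; ring
  rw [e, ha2, hb12, hb22]
  linarith [key]
end

section
/- Let n ≥ 1 and let f : ℝ → ℝ be 2π-periodic and 2n times continuously differentiable. Then for every integer M ≥ 1, the trapezoid (equal-weight Riemann) sum with step ε = 2π/M satisfies | ∫₀^{2π} f(x) dx − ε·Σ_{m=0}^{M−1} f(mε) | ≤ 2π · (|B_{2n}| / (2n)!) · ε^{2n} · sup_{x∈ℝ} |f^{(2n)}(x)|, where B_{2n} is the 2n-th Bernoulli number. -/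
open scoped BigOperators
open Complex Set Function intervalIntegral
open Real (pi)

namespace TrapAux

noncomputable section

local notation "π" => Real.pi

lemma two_pi_pos : (0:ℝ) < 2 * π := by positivity

instance : Fact ((0:ℝ) < 2 * π) := ⟨two_pi_pos⟩

lemma periodic_iteratedDeriv {f : ℝ → ℝ} {c : ℝ} (h : Function.Periodic f c) (k : ℕ) :
    Function.Periodic (iteratedDeriv k f) c := by
  intro x
  have hfc : (fun y => f (y + c)) = f := funext h
  have h2 := congrFun (iteratedDeriv_comp_add_const k f c) x
  rw [hfc] at h2
  exact h2.symm

lemma continuous_plift {g : ℝ → ℂ} (hg : Function.Periodic g (2*π)) (hc : Continuous g) :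
    Continuous hg.lift := by
  refine continuous_coinduced_dom.mpr ?_
  exact hc.congr fun x => (hg.lift_coe x).symm

lemma norm_fourier_eq_one {T : ℝ} (n : ℤ) (x : AddCircle T) : ‖fourier n x‖ = 1 :=
  Circle.norm_coe _

lemma fourierCoeff_lift_eq {g : ℝ → ℂ} (hg : Function.Periodic g (2*π)) (j : ℤ) :
    fourierCoeff hg.lift j = fourierCoeffOn two_pi_pos g j := by
  rw [fourierCoeff_eq_intervalIntegral _ j 0, fourierCoeffOn_eq_integral, zero_add]
  congr 1
  · norm_num
  · apply intervalIntegral.integral_congr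
    intro x _
    simp only [Function.Periodic.lift_coe, fourier_coe_apply, sub_zero]

lemma coeffOn_deriv {g g' : ℝ → ℂ} (hg : ∀ x, HasDerivAt g (g' x) x)
    (hper : g (2*π) = g 0) (hc : Continuous g') {j : ℤ} (hj : j ≠ 0) :
    fourierCoeffOn two_pi_pos g j = fourierCoeffOn two_pi_pos g' j / (Complex.I * j) := by
  have h := fourierCoeffOn_of_hasDerivAt two_pi_pos hj (fun x _ => hg x)
      (hc.intervalIntegrable _ _)
  rw [hper, sub_self, mul_zero, zero_sub] at h
  rw [h]
  have hj' : (j:ℂ) ≠ 0 := Int.cast_ne_zero.mpr hj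
  have hπ : (π:ℂ) ≠ 0 := Complex.ofReal_ne_zero.mpr Real.pi_ne_zero
  have hI := Complex.I_ne_zero
  push_cast
  field_simp
  ring

lemma coeffOn_norm_le {g : ℝ → ℂ} (hgi : IntervalIntegrable g MeasureTheory.volume 0 (2*π))
    {S : ℝ} (hS : ∀ x, ‖g x‖ ≤ S) (j : ℤ) : ‖fourierCoeffOn two_pi_pos g j‖ ≤ S := by
  have hS0 : 0 ≤ S := le_trans (norm_nonneg _) (hS 0)
  rw [fourierCoeffOn_eq_integral, norm_smul]
  have hb : ‖∫ x in (0:ℝ)..(2*π), fourier (-j) (x : AddCircle (2*π - 0)) • g x‖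
      ≤ S * |2*π - 0| := by
    apply intervalIntegral.norm_integral_le_of_norm_le_const
    intro x _
    rw [norm_smul, norm_fourier_eq_one, one_mul]
    exact hS x
  calc ‖(1/(2*π-0) : ℝ)‖ * ‖∫ x in (0:ℝ)..(2*π), fourier (-j) (x : AddCircle (2*π-0)) • g x‖
      ≤ ‖(1/(2*π-0) : ℝ)‖ * (S * |2*π - 0|) := by
        apply mul_le_mul_of_nonneg_left hb (norm_nonneg _)
    _ = S := by
        have h1 : (2*π - 0 : ℝ) = 2*π := by ring
        rw [h1, Real.norm_eq_abs, abs_of_pos (show (0:ℝ) < 1/(2*π) by positivity),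
          abs_of_pos two_pi_pos]
        field_simp


lemma fourier_sum_aliasing {M : ℕ} (hM : 1 ≤ M) (j : ℤ) :
    ∑ m ∈ Finset.range M, (fourier j (((m : ℝ) * (2*π/M) : ℝ) : AddCircle (2*π)) : ℂ)
      = if (M:ℤ) ∣ j then (M:ℂ) else 0 := by
  have hM0 : (M:ℝ) ≠ 0 := Nat.cast_ne_zero.mpr (by omega)
  have hMc : (M:ℂ) ≠ 0 := by exact_mod_cast hM0
  have hπ : (π:ℂ) ≠ 0 := Complex.ofReal_ne_zero.mpr Real.pi_ne_zero
  have hterm : ∀ m : ℕ, (fourier j (((m : ℝ) * (2*π/M) : ℝ) : AddCircle (2*π)) : ℂ)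
      = Complex.exp (2*π*Complex.I*j/M) ^ m := by
    intro m
    rw [fourier_coe_apply, ← Complex.exp_nat_mul]
    congr 1
    push_cast
    field_simp
  simp_rw [hterm]
  by_cases hdvd : (M:ℤ) ∣ j
  · obtain ⟨k, rfl⟩ := hdvd
    have h1 : Complex.exp (2*π*Complex.I*(((M:ℤ)*k : ℤ) : ℂ)/M) = 1 := by
      rw [show (2*π*Complex.I*(((M:ℤ)*k : ℤ):ℂ)/M : ℂ) = (k:ℂ) * (2*π*Complex.I) by
        push_cast; field_simp]
      exact Complex.exp_int_mul_two_pi_mul_I k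
    rw [if_pos ⟨k, rfl⟩, h1]
    simp
  · rw [if_neg hdvd]
    have hz1 : Complex.exp (2*π*Complex.I*j/M) ≠ 1 := by
      intro hcon
      rw [Complex.exp_eq_one_iff] at hcon
      obtain ⟨k, hk⟩ := hcon
      apply hdvd
      refine ⟨k, ?_⟩
      have : (j:ℂ) = (M:ℂ) * k := by
        have h2 : (2*π*Complex.I : ℂ) ≠ 0 := by
          simp [Complex.I_ne_zero, hπ]
        field_simp at hk
        have h3 : (j:ℂ) * (2*π*Complex.I) = ((M:ℂ)*k) * (2*π*Complex.I) := by
          linear_combination (2*π*Complex.I) * hk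
        exact mul_right_cancel₀ h2 h3
      exact_mod_cast this
    rw [geom_sum_eq hz1]
    have hzM : Complex.exp (2*π*Complex.I*j/M) ^ M = 1 := by
      rw [← Complex.exp_nat_mul,
        show ((M:ℂ) * (2*π*Complex.I*j/M)) = (j:ℂ)*(2*π*Complex.I) by field_simp]
      exact Complex.exp_int_mul_two_pi_mul_I j
    rw [hzM, sub_self, zero_div]

set_option maxHeartbeats 800000 in
lemma hasSum_int_zeta (n : ℕ) (hn : n ≠ 0) :
    HasSum (fun j : ℤ => 1 / (j:ℝ)^(2*n))
      (2 * ((-1:ℝ)^(n+1) * (2:ℝ)^(2*n-1) * π^(2*n) * (bernoulli (2*n) : ℝ) / ((2*n).factorial : ℝ))) := by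
  have hZ := hasSum_zeta_nat hn
  set Z : ℝ := (-1:ℝ)^(n+1) * (2:ℝ)^(2*n-1) * π^(2*n) * (bernoulli (2*n) : ℝ) / ((2*n).factorial : ℝ) with hZdef
  have hEv : Even (2*n) := ⟨n, by omega⟩
  have hpos : HasSum (fun m : ℕ => 1/((m:ℝ)+1)^(2*n)) Z := by
    have h0 : (fun m : ℕ => 1/((m:ℝ)+1)^(2*n)) = fun m : ℕ => 1/(((m+1:ℕ)):ℝ)^(2*n) := by
      funext m; push_cast; ring
    rw [h0]
    have := (hasSum_nat_add_iff' (f := fun m : ℕ => 1/(m:ℝ)^(2*n)) 1).mpr hZ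
    simpa [zero_pow (show 2*n ≠ 0 by omega)] using this
  have h1 : HasSum (fun m : ℕ => 1/(((m:ℤ)):ℝ)^(2*n)) Z := by
    convert hZ using 2 with m
    rw [Int.cast_natCast]
  have h2 : HasSum (fun m : ℕ => 1/(((-(m+1):ℤ)):ℝ)^(2*n)) Z := by
    convert hpos using 2 with m
    push_cast
    rw [hEv.neg_pow]
  have hfinal := HasSum.of_nat_of_neg_add_one
      (f := fun j : ℤ => 1/(j:ℝ)^(2*n)) h1 h2
  simpa [two_mul] using hfinal

end

end TrapAux

open scoped Real

set_option maxHeartbeats 1600000 in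
/-- Euler–Maclaurin type error bound for the trapezoid (equal-weight Riemann) quadrature
of a `2π`-periodic, `2n` times continuously differentiable function, in terms of the
Bernoulli number `B_{2n}`. -/
theorem trapezoid_error_bound (n : ℕ) (hn : 1 ≤ n) (f : ℝ → ℝ)
    (hper : Function.Periodic f (2 * Real.pi)) (hf : ContDiff ℝ (2 * n) f)
    (M : ℕ) (hM : 1 ≤ M) :
    |(∫ x in (0 : ℝ)..(2 * Real.pi), f x) -
        (2 * Real.pi / M) * ∑ m ∈ Finset.range M, f (m * (2 * Real.pi / M))| ≤
      2 * Real.pi * (|((bernoulli (2 * n) : ℚ) : ℝ)| / (Nat.factorial (2 * n) : ℝ)) *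
        (2 * Real.pi / M) ^ (2 * n) * (⨆ x : ℝ, |iteratedDeriv (2 * n) f x|) := by
  classical
  have hπ := Real.pi_pos
  have hN0 : 2 * n ≠ 0 := by omega
  have hNeven : Even (2 * n) := ⟨n, by omega⟩
  have hM0 : (M:ℝ) ≠ 0 := Nat.cast_ne_zero.mpr (by omega)
  have hMc : (M:ℂ) ≠ 0 := by exact_mod_cast hM0
  have hMZ : (M:ℤ) ≠ 0 := by exact_mod_cast (show M ≠ 0 by omega)
  have hfact : (0:ℝ) < (Nat.factorial (2*n) : ℝ) := by
    exact_mod_cast Nat.factorial_pos (2*n)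
  -- derivatives and sup bound
  have hg_per : ∀ k : ℕ, Function.Periodic (iteratedDeriv k f) (2*π) :=
    fun k => TrapAux.periodic_iteratedDeriv hper k
  have hgcont : Continuous (iteratedDeriv (2*n) f) :=
    hf.continuous_iteratedDeriv (2*n) (by exact_mod_cast le_rfl)
  set S := ⨆ x : ℝ, |iteratedDeriv (2*n) f x| with hSdef
  have hbdd : BddAbove (Set.range fun x => |iteratedDeriv (2*n) f x|) := by
    have hperabs : Function.Periodic (fun x => |iteratedDeriv (2*n) f x|) (2*π) := by
      intro x; simp only [hg_per (2*n) x]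
    have himg : (fun x => |iteratedDeriv (2*n) f x|) '' Set.Icc 0 (0 + 2*π)
        = Set.range fun x => |iteratedDeriv (2*n) f x| :=
      hperabs.image_Icc TrapAux.two_pi_pos 0
    rw [← himg]
    exact (isCompact_Icc.image (continuous_abs.comp hgcont)).bddAbove
  have hle : ∀ x, |iteratedDeriv (2*n) f x| ≤ S := fun x => le_ciSup hbdd x
  have hS0 : 0 ≤ S := le_trans (abs_nonneg _) (hle 0)
  -- complex lift
  set fc : ℝ → ℂ := fun x => (f x : ℂ) with hfc
  have hperc : Function.Periodic fc (2*π) := fun x => by simp [hfc, hper x]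
  have hfccont : Continuous fc := Complex.continuous_ofReal.comp hf.continuous
  set c : ℤ → ℂ := fun j => fourierCoeffOn TrapAux.two_pi_pos fc j with hcdef
  -- integration by parts chain
  have hchain : ∀ j : ℤ, j ≠ 0 → ∀ k : ℕ, k ≤ 2*n →
      (Complex.I * j)^k * c j
        = fourierCoeffOn TrapAux.two_pi_pos (fun x => ((iteratedDeriv k f x : ℝ) : ℂ)) j := by
    intro j hj k
    induction k with
    | zero => intro _; simp [hcdef, hfc]
    | succ k ih =>
      intro hk
      have hk' : k < 2*n := by omega
      have hdiff : Differentiable ℝ (iteratedDeriv k f) :=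
        hf.differentiable_iteratedDeriv k (by exact_mod_cast hk')
      have hder : ∀ x, HasDerivAt (fun y => ((iteratedDeriv k f y : ℝ) : ℂ))
          (((iteratedDeriv (k+1) f x : ℝ) : ℂ)) x := by
        intro x
        have h0 := (hdiff x).hasDerivAt
        rw [← iteratedDeriv_succ] at h0
        exact h0.ofReal_comp
      have hcont' : Continuous fun x => ((iteratedDeriv (k+1) f x : ℝ) : ℂ) :=
        Complex.continuous_ofReal.comp
          (hf.continuous_iteratedDeriv (k+1) (by exact_mod_cast hk'))
      have hper' : (fun x => ((iteratedDeriv k f x : ℝ) : ℂ)) (2*π)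
          = (fun x => ((iteratedDeriv k f x : ℝ) : ℂ)) 0 := by
        have := hg_per k 0
        rw [zero_add] at this
        simp only [this]
      have hibp := TrapAux.coeffOn_deriv hder hper' hcont' hj
      have hIj : (Complex.I * (j:ℂ)) ≠ 0 :=
        mul_ne_zero Complex.I_ne_zero (Int.cast_ne_zero.mpr hj)
      calc (Complex.I*(j:ℂ))^(k+1) * c j
          = (Complex.I*(j:ℂ)) * ((Complex.I*(j:ℂ))^k * c j) := by ring
        _ = (Complex.I*(j:ℂ)) *
            fourierCoeffOn TrapAux.two_pi_pos (fun x => ((iteratedDeriv k f x : ℝ) : ℂ)) j := by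
            rw [ih (by omega)]
        _ = _ := by rw [hibp]; field_simp
  -- coefficient decay
  have hnorm : ∀ j : ℤ, j ≠ 0 → ‖c j‖ ≤ S / (j:ℝ)^(2*n) := by
    intro j hj
    have h1 := hchain j hj (2*n) le_rfl
    have h2 : ‖fourierCoeffOn TrapAux.two_pi_pos (fun x => ((iteratedDeriv (2*n) f x : ℝ) : ℂ)) j‖ ≤ S :=
      TrapAux.coeffOn_norm_le
        ((Complex.continuous_ofReal.comp hgcont).intervalIntegrable _ _)
        (fun x => by simpa using hle x) j
    have hjne : ((j:ℝ)) ≠ 0 := Int.cast_ne_zero.mpr hj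
    have hjpos : 0 < (j:ℝ)^(2*n) := by
      rw [← hNeven.pow_abs]
      exact pow_pos (abs_pos.mpr hjne) _
    rw [le_div_iff₀ hjpos]
    have h3 : ‖(Complex.I * (j:ℂ))^(2*n)‖ = (j:ℝ)^(2*n) := by
      rw [norm_pow, norm_mul, Complex.norm_I, one_mul]
      rw [show ((j:ℂ)) = (((j:ℝ)):ℂ) by push_cast; rfl, Complex.norm_real,
        Real.norm_eq_abs, hNeven.pow_abs]
    calc ‖c j‖ * (j:ℝ)^(2*n) = ‖(Complex.I * (j:ℂ))^(2*n) * c j‖ := by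
          rw [norm_mul, h3, mul_comm]
      _ ≤ S := h1 ▸ h2
  -- zeta sum
  have hZsum := TrapAux.hasSum_int_zeta n (by omega)
  set Z2 : ℝ := 2 * ((-1:ℝ)^(n+1) * (2:ℝ)^(2*n-1) * π^(2*n) * (bernoulli (2*n) : ℝ)
      / ((2*n).factorial : ℝ)) with hZ2def
  have hZ2nonneg : 0 ≤ Z2 := hZsum.nonneg (fun j => by rw [← hNeven.pow_abs]; positivity)
  have hZ2val : Z2 = (2:ℝ)^(2*n) * π^(2*n) / ((2*n).factorial : ℝ)
      * |((bernoulli (2*n) : ℚ) : ℝ)| := by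
    have h2pow : (2:ℝ)^(2*n) = 2 * 2^(2*n-1) := by
      rw [← pow_succ']
      congr 1
      omega
    have hcoefpos : (0:ℝ) < (2:ℝ)^(2*n) * π^(2*n) / ((2*n).factorial : ℝ) := by positivity
    have hZ2eq : Z2 = (2:ℝ)^(2*n) * π^(2*n) / ((2*n).factorial : ℝ)
        * ((-1:ℝ)^(n+1) * ((bernoulli (2*n) : ℚ) : ℝ)) := by
      rw [hZ2def, h2pow]; push_cast; ring
    have hBnn : 0 ≤ (-1:ℝ)^(n+1) * ((bernoulli (2*n) : ℚ) : ℝ) := by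
      by_contra hneg
      push_neg at hneg
      have : Z2 < 0 := by
        rw [hZ2eq]
        exact mul_neg_of_pos_of_neg hcoefpos hneg
      linarith
    rw [hZ2eq]
    congr 1
    rw [← _root_.abs_of_nonneg hBnn, _root_.abs_mul, _root_.abs_pow, _root_.abs_neg, _root_.abs_one, one_pow, one_mul]
  -- summability of coefficients
  have hsummc : Summable c := by
    apply Summable.of_norm_bounded
      (g := fun j : ℤ => S * (1/(j:ℝ)^(2*n)) + if j = 0 then ‖c 0‖ else 0)
      ((hZsum.summable.mul_left S).add ((hasSum_ite_eq (0:ℤ) ‖c 0‖).summable))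
    intro j
    by_cases hj : j = 0
    · simp [hj, zero_pow hN0]
    · rw [if_neg hj, add_zero, mul_one_div]
      exact hnorm j hj
  have hcoefeq : fourierCoeff hperc.lift = c :=
    funext fun j => TrapAux.fourierCoeff_lift_eq hperc j
  -- pointwise convergence of Fourier series
  set Fc : C(AddCircle (2*π), ℂ) := ⟨hperc.lift, TrapAux.continuous_plift hperc hfccont⟩ with hFc
  have hpt : ∀ x : ℝ, HasSum (fun j : ℤ => c j * fourier j (x : AddCircle (2*π))) (fc x) := by
    intro x
    have hsum' : Summable (fourierCoeff (⇑Fc)) := by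
      show Summable (fourierCoeff hperc.lift)
      rw [hcoefeq]; exact hsummc
    have h0 := has_pointwise_sum_fourier_series_of_summable hsum' (x : AddCircle (2*π))
    have h1 : fourierCoeff (⇑Fc) = c := hcoefeq
    rw [h1] at h0
    simpa [smul_eq_mul, hperc.lift_coe x, hFc] using h0
  -- trapezoid sum via aliasing
  have hsum_m : HasSum
      (fun j : ℤ => ∑ m ∈ Finset.range M, c j * fourier j (((m:ℝ) * (2*π/M) : ℝ) : AddCircle (2*π)))
      (∑ m ∈ Finset.range M, fc ((m:ℝ) * (2*π/M))) :=
    hasSum_sum fun m _ => hpt ((m:ℝ) * (2*π/M))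
  set A : ℂ := ∑ m ∈ Finset.range M, fc ((m:ℝ) * (2*π/M)) with hAdef
  have halias : HasSum (fun j : ℤ => c j * (if (M:ℤ) ∣ j then (M:ℂ) else 0)) A := by
    have heq : (fun j : ℤ => ∑ m ∈ Finset.range M,
        c j * fourier j (((m:ℝ) * (2*π/M) : ℝ) : AddCircle (2*π)))
        = fun j : ℤ => c j * (if (M:ℤ) ∣ j then (M:ℂ) else 0) := by
      funext j
      rw [← Finset.mul_sum, TrapAux.fourier_sum_aliasing hM j]
    rw [← heq]
    exact hsum_m
  have hinj : Function.Injective (fun k : ℤ => (M:ℤ) * k) := fun a b h =>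
    mul_left_cancel₀ hMZ h
  have hvanish : ∀ j ∉ Set.range (fun k : ℤ => (M:ℤ)*k),
      c j * (if (M:ℤ) ∣ j then (M:ℂ) else 0) = 0 := by
    intro j hj
    rw [if_neg, mul_zero]
    rintro ⟨k, hk⟩
    exact hj ⟨k, hk.symm⟩
  have hsub : HasSum ((fun j : ℤ => c j * (if (M:ℤ) ∣ j then (M:ℂ) else 0))
      ∘ (fun k : ℤ => (M:ℤ) * k)) A := (hinj.hasSum_iff hvanish).mpr halias
  have hk1 : HasSum (fun k : ℤ => c ((M:ℤ)*k) * M) A := by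
    have heq : ((fun j : ℤ => c j * (if (M:ℤ) ∣ j then (M:ℂ) else 0))
        ∘ (fun k : ℤ => (M:ℤ) * k)) = fun k : ℤ => c ((M:ℤ)*k) * M := by
      funext k
      simp [Function.comp, if_pos (dvd_mul_right (M:ℤ) k)]
    rw [← heq]
    exact hsub
  have hk2 : HasSum (fun k : ℤ => c ((M:ℤ)*k)) (A / M) := by
    have := hk1.div_const (M:ℂ)
    have heq : (fun k : ℤ => c ((M:ℤ)*k) * M / M) = fun k : ℤ => c ((M:ℤ)*k) := by
      funext k
      rw [mul_div_cancel_right₀ _ hMc]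
    rwa [heq] at this
  have hdelta : HasSum (fun k : ℤ => if k = 0 then (0:ℂ) else c ((M:ℤ)*k)) (A/M - c 0) := by
    have h0 : HasSum (fun k : ℤ => if k = 0 then c 0 else 0) (c 0) := hasSum_ite_eq 0 (c 0)
    have hs := hk2.sub h0
    have heq : (fun k : ℤ => c ((M:ℤ)*k) - if k = 0 then c 0 else 0)
        = fun k : ℤ => if k = 0 then (0:ℂ) else c ((M:ℤ)*k) := by
      funext k
      by_cases hk : k = 0
      · simp [hk]
      · simp [hk]
    rwa [heq] at hs
  -- the integral equals 2π c 0
  have hc0 : (2*(π:ℂ)) * c 0 = ((∫ x in (0:ℝ)..(2*π), f x : ℝ) : ℂ) := by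
    rw [hcdef]
    simp only []
    rw [fourierCoeffOn_eq_integral]
    have hint : (∫ x in (0:ℝ)..(2*π), fourier (-0) (x : AddCircle (2*π-0)) • fc x)
        = ((∫ x in (0:ℝ)..(2*π), f x : ℝ) : ℂ) := by
      rw [← intervalIntegral.integral_ofReal]
      apply intervalIntegral.integral_congr
      intro x _
      simp [neg_zero, fourier_zero, hfc]
    rw [hint, real_smul]
    push_cast
    have : ((2:ℂ)*π - 0) ≠ 0 := by
      simp only [sub_zero]
      exact mul_ne_zero two_ne_zero (Complex.ofReal_ne_zero.mpr Real.pi_ne_zero)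
    field_simp
    ring
  -- norm bound on the tail
  have hβ : HasSum (fun k : ℤ => S/(M:ℝ)^(2*n) * (1/(k:ℝ)^(2*n))) (S/(M:ℝ)^(2*n) * Z2) :=
    hZsum.mul_left _
  have hptwise : ∀ k : ℤ, ‖if k = 0 then (0:ℂ) else c ((M:ℤ)*k)‖
      ≤ S/(M:ℝ)^(2*n) * (1/(k:ℝ)^(2*n)) := by
    intro k
    by_cases hk : k = 0
    · simp [hk, zero_pow hN0]
    · rw [if_neg hk]
      have hb := hnorm ((M:ℤ)*k) (mul_ne_zero hMZ hk)
      calc ‖c ((M:ℤ)*k)‖ ≤ S / (((M:ℤ)*k : ℤ):ℝ)^(2*n) := hb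
        _ = S/(M:ℝ)^(2*n) * (1/(k:ℝ)^(2*n)) := by
            push_cast
            rw [mul_pow, mul_one_div, div_div]
  have hsumnorm : Summable (fun k : ℤ => ‖if k = 0 then (0:ℂ) else c ((M:ℤ)*k)‖) :=
    Summable.of_nonneg_of_le (fun _ => norm_nonneg _) hptwise hβ.summable
  have hbound : ‖A/M - c 0‖ ≤ S/(M:ℝ)^(2*n) * Z2 := by
    rw [← hdelta.tsum_eq]
    refine le_trans (norm_tsum_le_tsum_norm hsumnorm) ?_
    refine le_trans (Summable.tsum_le_tsum hptwise hsumnorm hβ.summable) (le_of_eq hβ.tsum_eq)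
  -- assembling
  have hA : A = ((∑ m ∈ Finset.range M, f ((m:ℝ) * (2*π/M)) : ℝ) : ℂ) := by
    rw [hAdef, hfc]
    push_cast
    rfl
  have hDval : (((∫ x in (0 : ℝ)..(2*π), f x) -
      (2*π/M) * ∑ m ∈ Finset.range M, f ((m:ℝ) * (2*π/M)) : ℝ) : ℂ)
      = -(2*(π:ℂ)) * (A/M - c 0) := by
    push_cast
    rw [← hc0, hA]
    push_cast
    field_simp
    ring_nf
    congr 1
    refine Finset.sum_congr rfl fun x _ => ?_
    congr 2
    ring
  have habs : |(∫ x in (0 : ℝ)..(2*π), f x) -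
      (2*π/M) * ∑ m ∈ Finset.range M, f ((m:ℝ) * (2*π/M))|
      = (2*π) * ‖A/M - c 0‖ := by
    rw [← Real.norm_eq_abs, ← Complex.norm_real]
    rw [show ((((∫ x in (0 : ℝ)..(2*π), f x) -
      (2*π/M) * ∑ m ∈ Finset.range M, f ((m:ℝ) * (2*π/M)) : ℝ)) : ℂ)
      = -(2*(π:ℂ)) * (A/M - c 0) from hDval]
    rw [norm_mul]
    congr 1
    · rw [norm_neg]
      rw [show (2*(π:ℂ)) = ((2*π : ℝ) : ℂ) by push_cast; rfl]
      rw [Complex.norm_real, Real.norm_eq_abs, abs_of_pos TrapAux.two_pi_pos]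
  rw [habs]
  calc (2*π) * ‖A/M - c 0‖ ≤ (2*π) * (S/(M:ℝ)^(2*n) * Z2) := by
        exact mul_le_mul_of_nonneg_left hbound (le_of_lt TrapAux.two_pi_pos)
    _ = 2 * π * (|((bernoulli (2 * n) : ℚ) : ℝ)| / (Nat.factorial (2 * n) : ℝ))
        * (2 * π / M) ^ (2 * n) * S := by
        rw [hZ2val]
        rw [div_pow, mul_pow]
        field_simp
end
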